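/- Let d ≥ 1, k ≥ 1, let g : ℝ^d → ℂ be k times continuously differentiable, let λ ∈ ℝ^d, and let ℓ ∈ {1, …, d} be an index with λ_ℓ ≠ 0. Set M_j = sup_{t ∈ C_R(0)} |(∂^j g/∂t_ℓ^j)(t)| for 0 ≤ j ≤ k. Then for every R > 0, |∫_{C_R(0)} e^{2πi⟨λ,t⟩} g(t) dt| ≤ (2π|λ_ℓ|)^{−k} |∫_{C_R(0)} e^{2πi⟨λ,t⟩} (∂^k g/∂t_ℓ^k)(t) dt| + (2R)^{d−1} ∑_{j=1}^k M_{j−1} / (π|λ_ℓ|)^j. -/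

import Mathlib

open MeasureTheory

noncomputable section

/-- The cube `C_R(0) = [-R, R]^d` in `ℝ^d`. -/
def cube (d : ℕ) (R : ℝ) : Set (EuclideanSpace ℝ (Fin d)) :=
  {t | ∀ i, |t i| ≤ R}

/-- Partial derivative in the `ℓ`-th coordinate direction. -/
def pderivDir {d : ℕ} (ℓ : Fin d) (g : EuclideanSpace ℝ (Fin d) → ℂ) :
    EuclideanSpace ℝ (Fin d) → ℂ :=
  fun t => fderiv ℝ g t (EuclideanSpace.single ℓ 1)

/-!
Integrating by parts in the direction `t_ℓ`, i.e. applying the divergence theorem on the cube to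
the vector field `e_λ g` times the `ℓ`-th basis vector (`e_λ(t) = e^{2πi⟨λ,t⟩}`), gives
`2πiλ_ℓ ∫ e_λ g = (∫_{t_ℓ = R} e_λ g - ∫_{t_ℓ = -R} e_λ g) - ∫ e_λ ∂_ℓ g`.
Since `|e_λ| = 1`, each of the two faces, of volume `(2R)^{d-1}`, contributes at most
`M_0 (2R)^{d-1}`. Applying this step to `∂_ℓ^j g` for `j < k` and using
`(π|λ_ℓ|)^{j+1} ≤ π|λ_ℓ| (2π|λ_ℓ|)^j` to put the boundary terms on a common scale gives the bound.
-/

open Set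

lemma IsCompact.norm_le_biSup_norm {X E : Type*} [TopologicalSpace X] [NormedAddCommGroup E]
    {s : Set X} (hs : IsCompact s) {f : X → E} (hf : ContinuousOn f s) {x : X} (hx : x ∈ s) :
    ‖f x‖ ≤ ⨆ y ∈ s, ‖f y‖ := by
  have hbdd := (hs.image_of_continuousOn hf.norm).bddAbove
  rw [← csSup_image (by rwa [image_eq_range] at hbdd)
    (by simpa using Real.iSup_nonneg fun _ => norm_nonneg _)]
  exact le_csSup hbdd (mem_image_of_mem _ hx)

theorem integral_Icc_fderiv_single_eq_sub {E : Type*} [NormedAddCommGroup E] [NormedSpace ℝ E]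
    {n : ℕ} {a b : Fin (n + 1) → ℝ} (hle : a ≤ b) (ℓ : Fin (n + 1))
    {v : (Fin (n + 1) → ℝ) → E} {v' : (Fin (n + 1) → ℝ) → (Fin (n + 1) → ℝ) →L[ℝ] E}
    (hc : ContinuousOn v (Icc a b))
    (hd : ∀ x ∈ univ.pi fun i => Ioo (a i) (b i), HasFDerivAt v (v' x) x)
    (hi : IntegrableOn (fun x => v' x (Pi.single ℓ 1)) (Icc a b)) :
    ∫ x in Icc a b, v' x (Pi.single ℓ 1) =
      (∫ y in Icc (a ∘ ℓ.succAbove) (b ∘ ℓ.succAbove), v (ℓ.insertNth (b ℓ) y)) -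
        ∫ y in Icc (a ∘ ℓ.succAbove) (b ∘ ℓ.succAbove), v (ℓ.insertNth (a ℓ) y) := by
  have hdiv (x) :
      ∑ i, (Pi.single ℓ v' : Fin (n + 1) → _) i x (Pi.single i 1) = v' x (Pi.single ℓ 1) :=
    (Fintype.sum_eq_single ℓ fun i hi => by simp [hi]).trans (by simp)
  have key := integral_divergence_of_hasFDerivAt_off_countable' a b hle (Pi.single ℓ v)
    (Pi.single ℓ v') ∅ countable_empty (fun i => ?_) (fun x hx i => ?_) (by simpa [hdiv] using hi)
  · simp only [hdiv] at key
    rw [key, Fintype.sum_eq_single ℓ fun i hi => by simp [hi]]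
    simp
  · rcases eq_or_ne i ℓ with rfl | hi
    · simpa using hc
    · rw [Pi.single_eq_of_ne hi]
      exact continuousOn_const
  · rcases eq_or_ne i ℓ with rfl | hi
    · simpa using hd x hx.1
    · rw [Pi.single_eq_of_ne hi, Pi.single_eq_of_ne hi]
      exact hasFDerivAt_const (0 : E) x

lemma volume_real_Icc_const (n : ℕ) {R : ℝ} (hR : 0 ≤ R) :
    volume.real (Icc (fun _ : Fin n => -R) fun _ => R) = (2 * R) ^ n := by
  simp [measureReal_def, Real.volume_Icc_pi, two_mul, add_nonneg hR hR]

lemma preimage_toLp_cube (d : ℕ) (R : ℝ) :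
    WithLp.toLp 2 ⁻¹' cube d R = Icc (fun _ => -R) (fun _ => R) := by
  ext x
  simp [cube, abs_le, Pi.le_def, forall_and]

lemma isCompact_cube (d : ℕ) (R : ℝ) : IsCompact (cube d R) := by
  rw [← image_preimage_eq (cube d R) (WithLp.toLp_surjective 2), preimage_toLp_cube]
  exact isCompact_Icc.image (PiLp.continuous_toLp 2 _)

lemma setIntegral_cube {E : Type*} [NormedAddCommGroup E] [NormedSpace ℝ E] (d : ℕ) (R : ℝ)
    (F : EuclideanSpace ℝ (Fin d) → E) :
    ∫ t in cube d R, F t = ∫ x in Icc (fun _ => -R) (fun _ => R), F (WithLp.toLp 2 x) := by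
  rw [← preimage_toLp_cube, (PiLp.volume_preserving_toLp (Fin d)).setIntegral_preimage_emb
    (MeasurableEquiv.toLp 2 (Fin d → ℝ)).measurableEmbedding]

lemma contDiff_pderivDir {d : ℕ} (ℓ : Fin d) {g : EuclideanSpace ℝ (Fin d) → ℂ}
    {m n : WithTop ℕ∞} (hg : ContDiff ℝ n g) (hmn : m + 1 ≤ n) :
    ContDiff ℝ m (pderivDir ℓ g) :=
  (hg.fderiv_right hmn).clm_apply contDiff_const

lemma contDiff_iterate_pderivDir {d : ℕ} (ℓ : Fin d) {g : EuclideanSpace ℝ (Fin d) → ℂ}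
    {m n : WithTop ℕ∞} (hg : ContDiff ℝ n g) {j : ℕ} (hmn : m + j ≤ n) :
    ContDiff ℝ m ((pderivDir ℓ)^[j] g) := by
  induction j generalizing m with
  | zero => simpa using hg.of_le (by simpa using hmn)
  | succ j ih =>
    rw [Function.iterate_succ_apply']
    refine contDiff_pderivDir ℓ (ih (m := m + 1) ?_) le_rfl
    rwa [Nat.cast_succ, add_comm (j : WithTop ℕ∞), ← add_assoc] at hmn

lemma pderivDir_mul {d : ℕ} (ℓ : Fin d) {f g : EuclideanSpace ℝ (Fin d) → ℂ}
    {t : EuclideanSpace ℝ (Fin d)} (hf : DifferentiableAt ℝ f t) (hg : DifferentiableAt ℝ g t) :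
    pderivDir ℓ (fun t => f t * g t) t = pderivDir ℓ f t * g t + f t * pderivDir ℓ g t := by
  simp only [pderivDir, fderiv_fun_mul hf hg, add_apply, smul_apply, smul_eq_mul]
  ring

lemma norm_setIntegral_cube_pderivDir_le {n : ℕ} (ℓ : Fin (n + 1))
    {u : EuclideanSpace ℝ (Fin (n + 1)) → ℂ} (hu : ContDiff ℝ 1 u) {R M : ℝ} (hR : 0 ≤ R)
    (hM : ∀ t ∈ cube (n + 1) R, ‖u t‖ ≤ M) :
    ‖∫ t in cube (n + 1) R, pderivDir ℓ u t‖ ≤ 2 * (2 * R) ^ n * M := by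
  set v : (Fin (n + 1) → ℝ) → ℂ := fun x => u (WithLp.toLp 2 x)
  have hv : ContDiff ℝ 1 v := hu.comp PiLp.contDiff_toLp
  have hpderiv (x) : pderivDir ℓ u (WithLp.toLp 2 x) = fderiv ℝ v x (Pi.single ℓ 1) := by
    rw [show v = u ∘ (PiLp.continuousLinearEquiv 2 ℝ _).symm from rfl,
      ContinuousLinearEquiv.comp_right_fderiv]
    rfl
  have hface (c : ℝ) (hc : |c| ≤ R) :
      ‖∫ y in Icc (fun _ : Fin n => -R) (fun _ => R), v (ℓ.insertNth c y)‖ ≤ M * (2 * R) ^ n := by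
    rw [← volume_real_Icc_const n hR]
    refine norm_setIntegral_le_of_norm_le_const (by simp [Real.volume_Icc_pi]) fun y hy => hM _ ?_
    rw [← mem_preimage, preimage_toLp_cube, Fin.insertNth_mem_Icc]
    exact ⟨abs_le.mp hc, hy⟩
  rw [setIntegral_cube]
  simp only [hpderiv]
  rw [integral_Icc_fderiv_single_eq_sub (fun _ => neg_le_self hR) ℓ hv.continuous.continuousOn
    (fun x _ => (hv.differentiable one_ne_zero x).hasFDerivAt)
    ((hv.continuous_fderiv one_ne_zero).clm_apply continuous_const).integrableOn_Icc]
  calc _ ≤ M * (2 * R) ^ n + M * (2 * R) ^ n :=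
        (norm_sub_le _ _).trans (add_le_add (hface R (abs_of_nonneg hR).le)
          (hface (-R) (by simp [abs_of_nonneg hR])))
    _ = 2 * (2 * R) ^ n * M := by ring

def twist {d : ℕ} (lam t : EuclideanSpace ℝ (Fin d)) : ℂ :=
  Complex.exp (2 * Real.pi * Complex.I * ((∑ i, lam i * t i : ℝ) : ℂ))

lemma twist_eq_exp_inner {d : ℕ} (lam t : EuclideanSpace ℝ (Fin d)) :
    twist lam t = Complex.exp (2 * Real.pi * Complex.I * (inner ℝ lam t : ℝ)) := by
  simp [twist, PiLp.inner_apply, mul_comm]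

lemma norm_twist {d : ℕ} (lam t : EuclideanSpace ℝ (Fin d)) : ‖twist lam t‖ = 1 := by
  rw [twist, Complex.norm_exp]
  simp

lemma hasFDerivAt_twist {d : ℕ} (lam t : EuclideanSpace ℝ (Fin d)) :
    HasFDerivAt (twist lam)
      (twist lam t • (2 * Real.pi * Complex.I) • Complex.ofRealCLM.comp (innerSL ℝ lam)) t := by
  simp only [funext (twist_eq_exp_inner lam)]
  exact ((Complex.ofRealCLM.hasFDerivAt.comp t (innerSL ℝ lam).hasFDerivAt).const_mul _).cexp

lemma contDiff_twist {d : ℕ} (lam : EuclideanSpace ℝ (Fin d)) {n : WithTop ℕ∞} :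
    ContDiff ℝ n (twist lam) := by
  simp only [funext (twist_eq_exp_inner lam)]
  exact Complex.contDiff_exp.comp
    (contDiff_const.mul (Complex.ofRealCLM.contDiff.comp (innerSL ℝ lam).contDiff))

lemma pderivDir_twist {d : ℕ} (ℓ : Fin d) (lam t : EuclideanSpace ℝ (Fin d)) :
    pderivDir ℓ (twist lam) t = 2 * Real.pi * Complex.I * lam ℓ * twist lam t := by
  rw [pderivDir, (hasFDerivAt_twist lam t).fderiv]
  simp only [smul_apply, ContinuousLinearMap.comp_apply, coe_innerSL_apply,
    EuclideanSpace.inner_single_right, Real.ringHom_apply, one_mul, Complex.ofRealCLM_apply,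
    smul_eq_mul]
  ring

lemma norm_setIntegral_twist_mul_le_pderivDir {n : ℕ} (ℓ : Fin (n + 1))
    {lam : EuclideanSpace ℝ (Fin (n + 1))} (hℓ : lam ℓ ≠ 0)
    {g : EuclideanSpace ℝ (Fin (n + 1)) → ℂ} (hg : ContDiff ℝ 1 g) {R M : ℝ} (hR : 0 ≤ R)
    (hM : ∀ t ∈ cube (n + 1) R, ‖g t‖ ≤ M) :
    ‖∫ t in cube (n + 1) R, twist lam t * g t‖ ≤
      ‖∫ t in cube (n + 1) R, twist lam t * pderivDir ℓ g t‖ / (2 * Real.pi * |lam ℓ|)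
        + (2 * R) ^ n * (M / (Real.pi * |lam ℓ|)) := by
  set a : ℂ := 2 * Real.pi * Complex.I * lam ℓ
  have ha : ‖a‖ = 2 * Real.pi * |lam ℓ| := by simp [a, abs_of_pos Real.pi_pos]
  have hu : ContDiff ℝ 1 fun t => twist lam t * g t := (contDiff_twist lam).mul hg
  have hpderiv (t) : pderivDir ℓ (fun t => twist lam t * g t) t =
      a * (twist lam t * g t) + twist lam t * pderivDir ℓ g t := by
    rw [pderivDir_mul ℓ ((contDiff_twist lam).differentiable one_ne_zero t)
      (hg.differentiable one_ne_zero t), pderivDir_twist]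
    ring
  have hcube := isCompact_cube (n + 1) R
  have hibp : a * ∫ t in cube (n + 1) R, twist lam t * g t =
      (∫ t in cube (n + 1) R, pderivDir ℓ (fun t => twist lam t * g t) t) -
        ∫ t in cube (n + 1) R, twist lam t * pderivDir ℓ g t := by
    simp only [hpderiv]
    rw [integral_add, integral_const_mul]
    · ring
    · exact (hu.continuous.const_mul a).continuousOn.integrableOn_compact hcube
    · have hcont : Continuous (pderivDir ℓ g) :=
        (contDiff_pderivDir ℓ hg (zero_add 1).le).continuous
      exact ((contDiff_twist (n := 0) lam).continuous.mul hcont).continuousOn.integrableOn_compact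
        hcube
  have hboundary := norm_setIntegral_cube_pderivDir_le ℓ hu hR fun t ht => by
    simpa [norm_twist] using hM t ht
  have ha_pos : 0 < 2 * Real.pi * |lam ℓ| := by positivity
  rw [← mul_le_mul_iff_right₀ ha_pos, ← ha, ← norm_mul, hibp]
  calc _ ≤ _ := norm_sub_le _ _
    _ ≤ 2 * (2 * R) ^ n * M + ‖∫ t in cube (n + 1) R, twist lam t * pderivDir ℓ g t‖ := by
      gcongr
    _ = _ := by
      rw [ha]
      field_simp
      ring

theorem norm_setIntegral_twist_mul_le_iterate {n : ℕ} (ℓ : Fin (n + 1))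
    {lam : EuclideanSpace ℝ (Fin (n + 1))} (hℓ : lam ℓ ≠ 0) {k : ℕ}
    {g : EuclideanSpace ℝ (Fin (n + 1)) → ℂ} (hg : ContDiff ℝ (k : ℕ∞) g) {R : ℝ} (hR : 0 ≤ R) :
    ‖∫ t in cube (n + 1) R, twist lam t * g t‖ ≤
      ‖∫ t in cube (n + 1) R, twist lam t * (pderivDir ℓ)^[k] g t‖ / (2 * Real.pi * |lam ℓ|) ^ k
        + (2 * R) ^ n * ∑ j ∈ Finset.range k,
          (⨆ t ∈ cube (n + 1) R, ‖(pderivDir ℓ)^[j] g t‖) / (Real.pi * |lam ℓ|) ^ (j + 1) := by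
  induction k with
  | zero => simp
  | succ k ih =>
    set A := 2 * Real.pi * |lam ℓ|
    set P := Real.pi * |lam ℓ|
    set M := ⨆ t ∈ cube (n + 1) R, ‖(pderivDir ℓ)^[k] g t‖
    have hgk : ContDiff ℝ 1 ((pderivDir ℓ)^[k] g) :=
      contDiff_iterate_pderivDir ℓ hg (by norm_cast; omega)
    have hstep := norm_setIntegral_twist_mul_le_pderivDir ℓ hℓ hgk hR fun t ht =>
      (isCompact_cube (n + 1) R).norm_le_biSup_norm hgk.continuous.continuousOn ht
    have hM : 0 ≤ M := Real.iSup_nonneg fun _ => Real.iSup_nonneg fun _ => norm_nonneg _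
    have hPA : P ≤ A := by
      simp only [A, P]
      linarith [mul_pos Real.pi_pos (abs_pos.mpr hℓ)]
    have hlast : M / P / A ^ k ≤ M / P ^ (k + 1) := by
      rw [div_div, pow_succ']
      gcongr
    rw [Function.iterate_succ_apply', Finset.sum_range_succ]
    set I := ‖∫ t in cube (n + 1) R, twist lam t * pderivDir ℓ ((pderivDir ℓ)^[k] g) t‖
    set S := ∑ j ∈ Finset.range k,
      (⨆ t ∈ cube (n + 1) R, ‖(pderivDir ℓ)^[j] g t‖) / P ^ (j + 1)
    calc _ ≤ ‖∫ t in cube (n + 1) R, twist lam t * (pderivDir ℓ)^[k] g t‖ / A ^ k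
            + (2 * R) ^ n * S := ih (hg.of_le (by exact_mod_cast k.le_succ))
      _ ≤ (I / A + (2 * R) ^ n * (M / P)) / A ^ k + (2 * R) ^ n * S := by gcongr
      _ = I / A ^ (k + 1) + (2 * R) ^ n * (M / P / A ^ k) + (2 * R) ^ n * S := by ring
      _ ≤ I / A ^ (k + 1) + (2 * R) ^ n * (M / P ^ (k + 1)) + (2 * R) ^ n * S := by gcongr
      _ = I / A ^ (k + 1) + (2 * R) ^ n * (S + M / P ^ (k + 1)) := by ring

theorem twisted_integral_iterated_integration_by_parts_general
    {d : ℕ} {k : ℕ}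
    (g : EuclideanSpace ℝ (Fin d) → ℂ) (hg : ContDiff ℝ (k : ℕ∞) g)
    (lam : EuclideanSpace ℝ (Fin d)) (ℓ : Fin d) (hℓ : lam ℓ ≠ 0)
    (R : ℝ) (hR : 0 < R) :
    ‖∫ t in cube d R,
        Complex.exp (2 * Real.pi * Complex.I * ((∑ i, lam i * t i : ℝ) : ℂ)) * g t‖
      ≤ ‖∫ t in cube d R,
            Complex.exp (2 * Real.pi * Complex.I * ((∑ i, lam i * t i : ℝ) : ℂ))
              * (pderivDir ℓ)^[k] g t‖ / (2 * Real.pi * |lam ℓ|) ^ k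
        + (2 * R) ^ (d - 1) *
            ∑ j ∈ Finset.range k,
              (⨆ t ∈ cube d R, ‖(pderivDir ℓ)^[j] g t‖) / (Real.pi * |lam ℓ|) ^ (j + 1) := by
  cases d with
  | zero => exact ℓ.elim0
  | succ n => exact norm_setIntegral_twist_mul_le_iterate ℓ hℓ hg hR.le

/-- `k`-fold integration by parts for twisted integrals: if `λ_ℓ ≠ 0`, the twisted integral
of a `C^k` function `g` is bounded by `(2π|λ_ℓ|)^{-k}` times the twisted integral of the
`k`-th iterated partial derivative, plus boundary terms `(2R)^{d-1} ∑_{j=1}^k M_{j-1}/(π|λ_ℓ|)^j`. -/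
theorem twisted_integral_iterated_integration_by_parts
    {d : ℕ} (hd : 1 ≤ d) {k : ℕ} (hk : 1 ≤ k)
    (g : EuclideanSpace ℝ (Fin d) → ℂ) (hg : ContDiff ℝ (k : ℕ∞) g)
    (lam : EuclideanSpace ℝ (Fin d)) (ℓ : Fin d) (hℓ : lam ℓ ≠ 0)
    (R : ℝ) (hR : 0 < R) :
    ‖∫ t in cube d R,
        Complex.exp (2 * Real.pi * Complex.I * ((∑ i, lam i * t i : ℝ) : ℂ)) * g t‖
      ≤ ‖∫ t in cube d R,
            Complex.exp (2 * Real.pi * Complex.I * ((∑ i, lam i * t i : ℝ) : ℂ))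
              * (pderivDir ℓ)^[k] g t‖ / (2 * Real.pi * |lam ℓ|) ^ k
        + (2 * R) ^ (d - 1) *
            ∑ j ∈ Finset.range k,
              (⨆ t ∈ cube d R, ‖(pderivDir ℓ)^[j] g t‖) / (Real.pi * |lam ℓ|) ^ (j + 1) :=
  twisted_integral_iterated_integration_by_parts_general g hg lam ℓ hℓ R hR
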